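/- Let β > α > 0 be real numbers, and let ψ : (0,∞) → ℝ be measurable with ∫₀^∞ |ψ(t)| dt < ∞ and ∫₀^∞ t^β |ψ(t)| dt < ∞, and suppose ∫₀^∞ t^j ψ(t) dt = 0 for every integer j with 0 ≤ j ≤ ⌊α⌋. Set γ = α − min(⌊α⌋ + 1, β), so that γ < 0. Then there exists a constant C > 0 such that |I_+^{1+α}ψ(s)| ≤ C s^α for all 0 < s ≤ 1 and |I_+^{1+α}ψ(s)| ≤ C s^γ for all s ≥ 1. -/

import Mathlib

open MeasureTheory

/-- The Riemann–Liouville fractional integral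
`I_+^a g(t) = (1/Γ(a)) ∫₀^t g(r) (t-r)^{a-1} dr`. -/
noncomputable def riemannLiouville (a : ℝ) (g : ℝ → ℝ) (t : ℝ) : ℝ :=
  (1 / Real.Gamma a) * ∫ r in Set.Ioo 0 t, g r * (t - r) ^ (a - 1)

/-!
For `s ≤ 1` the kernel `(s - r)^α` is at most `s^α` on `(0, s)`, so `I_+^{1+α}ψ(s) = O(s^α)`.

For `s ≥ 1` write `(s - r)^α = s^α (1 - r/s)^α` and replace `(1 - x)^α` by its Taylor polynomial
`∑_{j ≤ n} c_j x^j` of degree `n = ⌊α⌋`, whose remainder is `O(x^{n+1})` uniformly on `[0, 1]`.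
With `m = min(n + 1, β)` the remainder contributes `O(s^{α-m} ∫ r^m |ψ|)`. The `j`-th polynomial
term is `c_j s^{α-j} ∫₀^s r^j ψ = -c_j s^{α-j} ∫_s^∞ r^j ψ` because the `j`-th moment of `ψ`
vanishes, and `r^j ≤ s^{j-β} r^β` for `r ≥ s` makes it `O(s^{α-β})`.
-/

open Set

theorem riemannLiouville_one_add (α : ℝ) (g : ℝ → ℝ) (s : ℝ) :
    riemannLiouville (1 + α) g s = (∫ r in Ioo 0 s, g r * (s - r) ^ α) / Real.Gamma (1 + α) := by
  rw [riemannLiouville, add_sub_cancel_left, one_div_mul_eq_div]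

theorem exists_abs_sub_sum_le_pow_of_contDiffOn {f : ℝ → ℝ} {δ : ℝ} {n : ℕ} (hδ : 0 < δ)
    (hf : ContinuousOn f (Icc 0 1)) (hf' : ContDiffOn ℝ (n + 1) f (Icc 0 δ)) :
    ∃ c : ℕ → ℝ, ∃ C, 0 ≤ C ∧ ∀ x ∈ Icc (0 : ℝ) 1,
      |f x - ∑ j ∈ Finset.range (n + 1), c j * x ^ j| ≤ C * x ^ (n + 1) := by
  obtain ⟨C₀, hC₀⟩ := exists_taylor_mean_remainder_bound hδ.le hf'
  set c : ℕ → ℝ := fun j => (j.factorial : ℝ)⁻¹ * iteratedDerivWithin j f (Icc 0 δ) 0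
  have htaylor : ∀ x,
      taylorWithinEval f n (Icc 0 δ) 0 x = ∑ j ∈ Finset.range (n + 1), c j * x ^ j := by
    intro x
    rw [taylor_within_apply]
    refine Finset.sum_congr rfl fun j _ => ?_
    simp only [c, sub_zero, smul_eq_mul]
    ring
  have hcont : ContinuousOn (fun x => f x - ∑ j ∈ Finset.range (n + 1), c j * x ^ j) (Icc δ 1) :=
    (hf.mono (Icc_subset_Icc_left hδ.le)).sub (by fun_prop)
  obtain ⟨M, hM⟩ := isCompact_Icc.exists_bound_of_continuousOn hcont
  refine ⟨c, max C₀ (max M 0 / δ ^ (n + 1)), le_max_of_le_right (by positivity),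
    fun x hx => ?_⟩
  rcases le_or_gt x δ with hxδ | hδx
  · have hrem := hC₀ x ⟨hx.1, hxδ⟩
    rw [htaylor, Real.norm_eq_abs, sub_zero] at hrem
    exact hrem.trans (by gcongr; exacts [pow_nonneg hx.1 _, le_max_left _ _])
  · calc |f x - ∑ j ∈ Finset.range (n + 1), c j * x ^ j| ≤ max M 0 :=
          (hM x ⟨hδx.le, hx.2⟩).trans (le_max_left _ _)
      _ ≤ max M 0 / δ ^ (n + 1) * x ^ (n + 1) := by
          rw [div_mul_eq_mul_div, le_div_iff₀ (by positivity)]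
          gcongr
      _ ≤ max C₀ (max M 0 / δ ^ (n + 1)) * x ^ (n + 1) := by
          gcongr
          · exact pow_nonneg hx.1 _
          · exact le_max_right _ _

theorem exists_abs_one_sub_rpow_sub_sum_le {α : ℝ} (hα : 0 ≤ α) (n : ℕ) :
    ∃ c : ℕ → ℝ, ∃ C, 0 ≤ C ∧ ∀ x ∈ Icc (0 : ℝ) 1,
      |(1 - x) ^ α - ∑ j ∈ Finset.range (n + 1), c j * x ^ j| ≤ C * x ^ (n + 1) := by
  refine exists_abs_sub_sum_le_pow_of_contDiffOn (δ := 1 / 2) (by norm_num)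
    ((Real.continuous_rpow_const hα).comp (continuous_const.sub continuous_id)).continuousOn
    fun x hx => ?_
  have hx1 : (1 : ℝ) - x ≠ 0 := by linarith [hx.2]
  exact ((Real.contDiffAt_rpow_const_of_ne hx1).comp x
    (contDiff_const.sub contDiff_id).contDiffAt).contDiffWithinAt

theorem abs_sub_rpow_sub_sum_le {α C m s r : ℝ} {n : ℕ} {c : ℕ → ℝ}
    (hTaylor : ∀ x ∈ Icc (0 : ℝ) 1,
      |(1 - x) ^ α - ∑ j ∈ Finset.range (n + 1), c j * x ^ j| ≤ C * x ^ (n + 1))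
    (hC : 0 ≤ C) (hm : 0 ≤ m) (hmn : m ≤ n + 1) (hs : 0 < s) (hr : r ∈ Icc 0 s) :
    |(s - r) ^ α - ∑ j ∈ Finset.range (n + 1), c j * s ^ (α - j) * r ^ j|
      ≤ C * s ^ (α - m) * r ^ m := by
  have hx : r / s ∈ Icc (0 : ℝ) 1 := ⟨div_nonneg hr.1 hs.le, div_le_one_of_le₀ hr.2 hs.le⟩
  have hscale : (s - r) ^ α - ∑ j ∈ Finset.range (n + 1), c j * s ^ (α - j) * r ^ j
      = s ^ α * ((1 - r / s) ^ α - ∑ j ∈ Finset.range (n + 1), c j * (r / s) ^ j) := by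
    rw [mul_sub, Finset.mul_sum, ← Real.mul_rpow hs.le (by linarith [hx.2]), mul_one_sub,
      mul_div_cancel₀ _ hs.ne']
    congr 1
    refine Finset.sum_congr rfl fun j _ => ?_
    rw [Real.rpow_sub hs, Real.rpow_natCast, div_pow]
    field_simp
  have hpow : (r / s) ^ (n + 1) ≤ (r / s) ^ m := by
    rw [← Real.rpow_natCast]
    exact Real.rpow_le_rpow_of_exponent_ge' hx.1 hx.2 hm (by exact_mod_cast hmn)
  calc |(s - r) ^ α - ∑ j ∈ Finset.range (n + 1), c j * s ^ (α - j) * r ^ j|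
      ≤ s ^ α * (C * (r / s) ^ (n + 1)) := by
        rw [hscale, abs_mul, abs_of_nonneg (by positivity)]
        gcongr
        exact hTaylor _ hx
    _ ≤ s ^ α * (C * (r / s) ^ m) := by gcongr
    _ = C * s ^ (α - m) * r ^ m := by
        rw [Real.div_rpow hr.1 hs.le, Real.rpow_sub hs]
        field_simp

theorem rpow_le_one_add_rpow {r p β : ℝ} (hr : 0 ≤ r) (hp : 0 ≤ p) (hpβ : p ≤ β) :
    r ^ p ≤ 1 + r ^ β := by
  rcases le_or_gt r 1 with hr1 | hr1
  · linarith [Real.rpow_le_one hr hr1 hp, Real.rpow_nonneg hr β]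
  · linarith [Real.rpow_le_rpow_of_exponent_le hr1.le hpβ]

section Integrals

variable {ψ : ℝ → ℝ} {α β s : ℝ}

theorem integrableOn_pow_mul_of_le {j : ℕ} (hj : (j : ℝ) ≤ β)
    (hψ : AEStronglyMeasurable ψ (volume.restrict (Ioi 0)))
    (hint : IntegrableOn (fun t => |ψ t|) (Ioi 0))
    (hint2 : IntegrableOn (fun t => t ^ β * |ψ t|) (Ioi 0)) :
    IntegrableOn (fun t => t ^ j * ψ t) (Ioi 0) := by
  refine (hint.add hint2).mono' ((continuous_pow j).aestronglyMeasurable.mul hψ) ?_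
  filter_upwards [ae_restrict_mem measurableSet_Ioi] with t (ht : 0 < t)
  have hpow : t ^ j ≤ 1 + t ^ β := by
    rw [← Real.rpow_natCast]
    exact rpow_le_one_add_rpow ht.le j.cast_nonneg hj
  rw [norm_mul, Real.norm_eq_abs, Real.norm_eq_abs, abs_pow, abs_of_pos ht]
  calc t ^ j * |ψ t| ≤ (1 + t ^ β) * |ψ t| := by gcongr
    _ = |ψ t| + t ^ β * |ψ t| := by ring

theorem abs_mul_sub_rpow_le (hα : 0 ≤ α) {r : ℝ} (hr : r ∈ Ioo 0 s) :
    |ψ r * (s - r) ^ α| ≤ s ^ α * |ψ r| := by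
  rw [abs_mul, abs_of_nonneg (Real.rpow_nonneg (by linarith [hr.2]) _), mul_comm]
  gcongr
  · linarith [hr.2]
  · linarith [hr.1]

theorem integrableOn_mul_sub_rpow (hα : 0 ≤ α)
    (hψ : AEStronglyMeasurable ψ (volume.restrict (Ioi 0)))
    (hint : IntegrableOn (fun t => |ψ t|) (Ioi 0)) :
    IntegrableOn (fun r => ψ r * (s - r) ^ α) (Ioo 0 s) := by
  refine ((hint.mono_set Ioo_subset_Ioi_self).const_mul (s ^ α)).mono' ?_ ?_
  · exact (hψ.mono_measure (Measure.restrict_mono Ioo_subset_Ioi_self le_rfl)).mul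
      ((Real.continuous_rpow_const hα).comp
        (continuous_const.sub continuous_id)).aestronglyMeasurable
  · filter_upwards [ae_restrict_mem measurableSet_Ioo] with r hr
    exact abs_mul_sub_rpow_le hα hr

theorem abs_integral_mul_sub_rpow_le (hα : 0 ≤ α) (hs : 0 ≤ s)
    (hint : IntegrableOn (fun t => |ψ t|) (Ioi 0)) :
    |∫ r in Ioo 0 s, ψ r * (s - r) ^ α| ≤ (∫ t in Ioi 0, |ψ t|) * s ^ α := by
  calc |∫ r in Ioo 0 s, ψ r * (s - r) ^ α| ≤ ∫ r in Ioo 0 s, s ^ α * |ψ r| := by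
        rw [← Real.norm_eq_abs]
        refine norm_integral_le_of_norm_le
          ((hint.mono_set Ioo_subset_Ioi_self).const_mul _) ?_
        filter_upwards [ae_restrict_mem measurableSet_Ioo] with r hr
        exact abs_mul_sub_rpow_le hα hr
    _ = s ^ α * ∫ r in Ioo 0 s, |ψ r| := integral_const_mul _ _
    _ ≤ s ^ α * ∫ t in Ioi 0, |ψ t| := by
        gcongr
        · exact .of_forall fun t => abs_nonneg _
        · exact Ioo_subset_Ioi_self
    _ = (∫ t in Ioi 0, |ψ t|) * s ^ α := mul_comm _ _

theorem abs_setIntegral_Ioo_pow_mul_le_of_moment_eq_zero {j : ℕ} (hj : (j : ℝ) ≤ β) (hs : 0 < s)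
    (hjint : IntegrableOn (fun t => t ^ j * ψ t) (Ioi 0))
    (hint2 : IntegrableOn (fun t => t ^ β * |ψ t|) (Ioi 0))
    (hmom : ∫ t in Ioi 0, t ^ j * ψ t = 0) :
    |∫ t in Ioo 0 s, t ^ j * ψ t| ≤ s ^ ((j : ℝ) - β) * ∫ t in Ioi 0, t ^ β * |ψ t| := by
  have hIci : Ici s ⊆ Ioi 0 := Ici_subset_Ioi.mpr hs
  have hsplit : (∫ t in Ioo 0 s, t ^ j * ψ t) + ∫ t in Ici s, t ^ j * ψ t = 0 := by
    rw [← setIntegral_union ((Iio_disjoint_Ici le_rfl).mono_left Ioo_subset_Iio_self)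
      measurableSet_Ici (hjint.mono_set Ioo_subset_Ioi_self) (hjint.mono_set hIci),
      Ioo_union_Ici_eq_Ioi hs, hmom]
  rw [eq_neg_of_add_eq_zero_left hsplit, abs_neg]
  calc |∫ t in Ici s, t ^ j * ψ t| ≤ ∫ t in Ici s, s ^ ((j : ℝ) - β) * (t ^ β * |ψ t|) := by
        rw [← Real.norm_eq_abs]
        refine norm_integral_le_of_norm_le ((hint2.mono_set hIci).const_mul _) ?_
        filter_upwards [ae_restrict_mem measurableSet_Ici] with t (hst : s ≤ t)
        have ht : 0 < t := hs.trans_le hst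
        have hpow : t ^ j ≤ s ^ ((j : ℝ) - β) * t ^ β :=
          calc t ^ j = t ^ ((j : ℝ) - β) * t ^ β := by
                rw [← Real.rpow_add ht, sub_add_cancel, Real.rpow_natCast]
            _ ≤ s ^ ((j : ℝ) - β) * t ^ β := by
                gcongr ?_ * _
                exact Real.rpow_le_rpow_of_nonpos hs hst (by linarith)
        rw [norm_mul, Real.norm_eq_abs, Real.norm_eq_abs, abs_pow, abs_of_pos ht, ← mul_assoc]
        gcongr
    _ = s ^ ((j : ℝ) - β) * ∫ t in Ici s, t ^ β * |ψ t| := integral_const_mul _ _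
    _ ≤ s ^ ((j : ℝ) - β) * ∫ t in Ioi 0, t ^ β * |ψ t| := by
        gcongr
        filter_upwards [ae_restrict_mem measurableSet_Ioi] with t (ht : 0 < t)
        positivity

theorem abs_integral_mul_sub_rpow_sub_sum_le {m C : ℝ} {n : ℕ} {c : ℕ → ℝ} (hα : 0 ≤ α)
    (hTaylor : ∀ x ∈ Icc (0 : ℝ) 1,
      |(1 - x) ^ α - ∑ j ∈ Finset.range (n + 1), c j * x ^ j| ≤ C * x ^ (n + 1))
    (hC : 0 ≤ C) (hm : 0 ≤ m) (hmn : m ≤ n + 1) (hmβ : m ≤ β) (hs : 0 < s)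
    (hψ : AEStronglyMeasurable ψ (volume.restrict (Ioi 0)))
    (hint : IntegrableOn (fun t => |ψ t|) (Ioi 0))
    (hint2 : IntegrableOn (fun t => t ^ β * |ψ t|) (Ioi 0))
    (hjint : ∀ j ∈ Finset.range (n + 1), IntegrableOn (fun t => t ^ j * ψ t) (Ioi 0)) :
    |(∫ r in Ioo 0 s, ψ r * (s - r) ^ α)
        - ∑ j ∈ Finset.range (n + 1), c j * s ^ (α - j) * ∫ r in Ioo 0 s, r ^ j * ψ r|
      ≤ C * s ^ (α - m) * ∫ t in Ioi 0, (|ψ t| + t ^ β * |ψ t|) := by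
  have hsub : Ioo 0 s ⊆ Ioi 0 := Ioo_subset_Ioi_self
  have hpoly : ∀ j ∈ Finset.range (n + 1),
      IntegrableOn (fun r => c j * s ^ (α - j) * (r ^ j * ψ r)) (Ioo 0 s) :=
    fun j hj => ((hjint j hj).mono_set hsub).const_mul _
  have hterm : ∀ j ∈ Finset.range (n + 1), c j * s ^ (α - j) * ∫ r in Ioo 0 s, r ^ j * ψ r
      = ∫ r in Ioo 0 s, c j * s ^ (α - j) * (r ^ j * ψ r) :=
    fun j _ => (integral_const_mul _ _).symm
  rw [Finset.sum_congr rfl hterm, ← integral_finsetSum _ hpoly,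
    ← integral_sub (integrableOn_mul_sub_rpow hα hψ hint) (integrable_finsetSum _ hpoly),
    ← Real.norm_eq_abs]
  calc _ ≤ ∫ r in Ioo 0 s, C * s ^ (α - m) * (|ψ r| + r ^ β * |ψ r|) := by
        refine norm_integral_le_of_norm_le (((hint.add hint2).mono_set hsub).const_mul _) ?_
        filter_upwards [ae_restrict_mem measurableSet_Ioo] with r hr
        have hE := abs_sub_rpow_sub_sum_le hTaylor hC hm hmn hs (Ioo_subset_Icc_self hr)
        have hpow := rpow_le_one_add_rpow hr.1.le hm hmβ
        have hfactor :
            ψ r * (s - r) ^ α - ∑ j ∈ Finset.range (n + 1), c j * s ^ (α - j) * (r ^ j * ψ r)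
            = ψ r * ((s - r) ^ α - ∑ j ∈ Finset.range (n + 1), c j * s ^ (α - j) * r ^ j) := by
          rw [mul_sub, Finset.mul_sum]
          congr 1
          exact Finset.sum_congr rfl fun j _ => by ring
        rw [hfactor, Real.norm_eq_abs, abs_mul]
        calc |ψ r| * |(s - r) ^ α - ∑ j ∈ Finset.range (n + 1), c j * s ^ (α - j) * r ^ j|
            ≤ |ψ r| * (C * s ^ (α - m) * (1 + r ^ β)) := by gcongr; exact hE.trans (by gcongr)
          _ = C * s ^ (α - m) * (|ψ r| + r ^ β * |ψ r|) := by ring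
    _ = C * s ^ (α - m) * ∫ r in Ioo 0 s, (|ψ r| + r ^ β * |ψ r|) := integral_const_mul _ _
    _ ≤ C * s ^ (α - m) * ∫ t in Ioi 0, (|ψ t| + t ^ β * |ψ t|) := by
        gcongr
        · filter_upwards [ae_restrict_mem measurableSet_Ioi] with t (ht : 0 < t)
          positivity
        · exact hint.add hint2

theorem exists_abs_integral_mul_sub_rpow_le_of_moments {m : ℝ} {n : ℕ} (hα : 0 ≤ α)
    (hψ : AEStronglyMeasurable ψ (volume.restrict (Ioi 0)))
    (hint : IntegrableOn (fun t => |ψ t|) (Ioi 0))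
    (hint2 : IntegrableOn (fun t => t ^ β * |ψ t|) (Ioi 0))
    (hnβ : (n : ℝ) ≤ β) (hmom : ∀ j : ℕ, j ≤ n → ∫ t in Ioi 0, t ^ j * ψ t = 0)
    (hm : 0 ≤ m) (hmn : m ≤ n + 1) (hmβ : m ≤ β) :
    ∃ C, 0 ≤ C ∧ ∀ s, 1 ≤ s → |∫ r in Ioo 0 s, ψ r * (s - r) ^ α| ≤ C * s ^ (α - m) := by
  obtain ⟨c, K, hK, hTaylor⟩ := exists_abs_one_sub_rpow_sub_sum_le hα n
  have hjn : ∀ j ∈ Finset.range (n + 1), j ≤ n := fun j hj => Finset.mem_range_succ_iff.mp hj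
  have hjβ : ∀ j ∈ Finset.range (n + 1), (j : ℝ) ≤ β :=
    fun j hj => le_trans (by exact_mod_cast hjn j hj) hnβ
  have hjint : ∀ j ∈ Finset.range (n + 1), IntegrableOn (fun t => t ^ j * ψ t) (Ioi 0) :=
    fun j hj => integrableOn_pow_mul_of_le (hjβ j hj) hψ hint hint2
  set M := ∫ t in Ioi 0, t ^ β * |ψ t|
  set W := ∫ t in Ioi 0, (|ψ t| + t ^ β * |ψ t|)
  have hM : 0 ≤ M := setIntegral_nonneg measurableSet_Ioi fun t (ht : 0 < t) => by positivity
  have hW : 0 ≤ W := setIntegral_nonneg measurableSet_Ioi fun t (ht : 0 < t) => by positivity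
  refine ⟨(∑ j ∈ Finset.range (n + 1), |c j|) * M + K * W, by positivity, fun s hs => ?_⟩
  have hs0 : 0 < s := one_pos.trans_le hs
  set P := ∑ j ∈ Finset.range (n + 1), c j * s ^ (α - j) * ∫ r in Ioo 0 s, r ^ j * ψ r
  have hpoly : ∀ j ∈ Finset.range (n + 1),
      |c j * s ^ (α - j) * ∫ r in Ioo 0 s, r ^ j * ψ r| ≤ |c j| * M * s ^ (α - m) := by
    intro j hj
    have htail := abs_setIntegral_Ioo_pow_mul_le_of_moment_eq_zero (hjβ j hj) hs0 (hjint j hj)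
      hint2 (hmom j (hjn j hj))
    rw [abs_mul, abs_mul, abs_of_pos (Real.rpow_pos_of_pos hs0 _)]
    calc |c j| * s ^ (α - j) * |∫ r in Ioo 0 s, r ^ j * ψ r|
        ≤ |c j| * s ^ (α - j) * (s ^ ((j : ℝ) - β) * M) := by gcongr
      _ = |c j| * M * s ^ (α - β) := by
          rw [← sub_add_sub_cancel α (j : ℝ) β, Real.rpow_add hs0]
          ring
      _ ≤ |c j| * M * s ^ (α - m) := by gcongr
  have hrem := abs_integral_mul_sub_rpow_sub_sum_le hα hTaylor hK hm hmn hmβ hs0 hψ hint hint2 hjint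
  calc |∫ r in Ioo 0 s, ψ r * (s - r) ^ α|
      = |P + ((∫ r in Ioo 0 s, ψ r * (s - r) ^ α) - P)| := by rw [add_sub_cancel]
    _ ≤ |P| + |(∫ r in Ioo 0 s, ψ r * (s - r) ^ α) - P| := abs_add_le _ _
    _ ≤ ∑ j ∈ Finset.range (n + 1), |c j| * M * s ^ (α - m) + K * s ^ (α - m) * W :=
        add_le_add ((Finset.abs_sum_le_sum_abs _ _).trans (Finset.sum_le_sum hpoly)) hrem
    _ = ((∑ j ∈ Finset.range (n + 1), |c j|) * M + K * W) * s ^ (α - m) := by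
        rw [← Finset.sum_mul, ← Finset.sum_mul]
        ring

end Integrals

theorem stmt_2 (α β : ℝ) (hα : 0 < α) (hαβ : α < β)
    (ψ : ℝ → ℝ) (hmeas : Measurable ψ)
    (hint : IntegrableOn (fun t => |ψ t|) (Set.Ioi 0))
    (hint2 : IntegrableOn (fun t => t ^ β * |ψ t|) (Set.Ioi 0))
    (hmom : ∀ j : ℕ, j ≤ ⌊α⌋₊ → ∫ t in Set.Ioi 0, t ^ j * ψ t = 0) :
    ∃ C : ℝ, 0 < C ∧
      (∀ s : ℝ, 0 < s → s ≤ 1 → |riemannLiouville (1 + α) ψ s| ≤ C * s ^ α) ∧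
      (∀ s : ℝ, 1 ≤ s →
        |riemannLiouville (1 + α) ψ s| ≤ C * s ^ (α - min ((⌊α⌋₊ : ℝ) + 1) β)) := by
  have hfloor : (⌊α⌋₊ : ℝ) ≤ α := Nat.floor_le hα.le
  have hαm : α < min ((⌊α⌋₊ : ℝ) + 1) β := lt_min (Nat.lt_floor_add_one α) hαβ
  obtain ⟨C₂, hC₂, hlarge⟩ := exists_abs_integral_mul_sub_rpow_le_of_moments hα.le
    hmeas.aestronglyMeasurable hint hint2 (hfloor.trans hαβ.le) hmom (by linarith) (min_le_left _ _)
    (min_le_right _ _)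
  set C₁ := ∫ t in Ioi 0, |ψ t|
  have hC₁ : 0 ≤ C₁ := setIntegral_nonneg measurableSet_Ioi fun t _ => abs_nonneg _
  have hΓ : 0 < Real.Gamma (1 + α) := Real.Gamma_pos_of_pos (by linarith)
  refine ⟨(C₁ + C₂ + 1) / Real.Gamma (1 + α), by positivity, fun s hs0 _ => ?_, fun s hs => ?_⟩
  all_goals
    rw [riemannLiouville_one_add, abs_div, abs_of_pos hΓ, div_mul_eq_mul_div,
      div_le_div_iff_of_pos_right hΓ]
  · calc _ ≤ C₁ * s ^ α := abs_integral_mul_sub_rpow_le hα.le hs0.le hint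
      _ ≤ (C₁ + C₂ + 1) * s ^ α := by gcongr; linarith
  · calc _ ≤ C₂ * s ^ (α - min ((⌊α⌋₊ : ℝ) + 1) β) := hlarge s hs
      _ ≤ (C₁ + C₂ + 1) * s ^ (α - min ((⌊α⌋₊ : ℝ) + 1) β) := by gcongr; linarith
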